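/- Let k be an algebraically closed field, φ a finite potent endomorphism of a k-vector space V, and W an admissible subspace for φ. Then (i) a nonzero scalar λ ∈ k is an eigenvalue of φ on V if and only if λ is a root of the characteristic polynomial of φ|_W; and (ii) det((1+φ)|_W) = ∏_{λ} (1+λ), the product taken over the multiset of roots (with multiplicity) of the characteristic polynomial of φ|_W. Since roots λ = 0 contribute factors 1+0 = 1, this says Det^k_V(1+φ) = ∏_{i=1}^{N}(1+λᵢ), where λ₁,…,λ_N are the nonzero eigenvalues of φ counted with algebraic multiplicity. -/

import Mathlib

/-!
An eigenvector `v` of `φ` for a nonzero eigenvalue `λ` satisfies `v = λ⁻ⁿ • φⁿ v ∈ W`, so away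
from `0` the eigenvalues of `φ` and of `φ|_W` agree, and the latter are the roots of the
characteristic polynomial. Evaluating that split polynomial at `-1` gives `det((1 + φ)|_W)`.
-/

section

open Polynomial Module.End

theorem LinearMap.det_algebraMap_add_eq_prod_roots_charpoly_of_splits
    {K V : Type*} [Field K] [AddCommGroup V] [Module K V] [FiniteDimensional K V]
    {f : V →ₗ[K] V} (h : f.charpoly.Splits) (c : K) :
    (algebraMap K _ c + f).det = (f.charpoly.roots.map (c + ·)).prod := by
  have hcard : Multiset.card f.charpoly.roots = Module.finrank K V := by
    rw [← h.natDegree_eq_card_roots, charpoly_natDegree]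
  have hneg : algebraMap K _ (-c) - f = (-1 : K) • (algebraMap K _ c + f) := by
    rw [map_neg]; module
  have heval := h.eval_eq_prod_roots_of_monic f.charpoly_monic (-c)
  rw [eval_charpoly, hneg, det_smul, ← hcard] at heval
  rw [← mul_right_inj' (pow_ne_zero _ (neg_ne_zero.2 one_ne_zero)), heval,
    ← Multiset.card_map (c + ·), ← Multiset.prod_map_neg, Multiset.map_map]
  exact congrArg _ (Multiset.map_congr rfl fun _ _ => by simp only [Function.comp_apply]; ring)

variable {k V : Type*} [Field k] [AddCommGroup V] [Module k V]

theorem Submodule.mem_of_apply_eq_smul_of_range_pow_le {φ : V →ₗ[k] V} {W : Submodule k V}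
    {n : ℕ} (hr : LinearMap.range (φ ^ n) ≤ W) {l : k} (hl : l ≠ 0) {v : V}
    (hv : φ v = l • v) : v ∈ W := by
  have hpow : (φ ^ n) v = l ^ n • v := by
    clear hr
    induction n with
    | zero => simp
    | succ m ih => rw [pow_succ', Module.End.mul_apply, ih, map_smul, hv, smul_smul, ← pow_succ]
  have : l ^ n • v ∈ W := hpow ▸ hr ⟨v, rfl⟩
  simpa [smul_smul, pow_ne_zero n hl] using W.smul_mem (l ^ n)⁻¹ this

theorem Module.End.hasEigenvalue_restrict_iff {φ : V →ₗ[k] V} {W : Submodule k V}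
    (hW : ∀ x ∈ W, φ x ∈ W) {l : k} (hmem : ∀ v, φ v = l • v → v ∈ W) :
    HasEigenvalue (φ.restrict hW) l ↔ ∃ v, v ≠ 0 ∧ φ v = l • v := by
  constructor
  · intro h
    obtain ⟨w, hw, hw0⟩ := h.exists_hasEigenvector
    exact ⟨w, by simpa using hw0, congrArg Subtype.val (mem_eigenspace_iff.1 hw)⟩
  · rintro ⟨v, hv0, hv⟩
    exact hasEigenvalue_of_hasEigenvector
      ⟨mem_eigenspace_iff.2 (Subtype.ext (a1 := φ.restrict hW ⟨v, hmem v hv⟩) hv),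
        by simpa using hv0⟩

end

theorem det_one_add_eq_prod_one_add_eigenvalues
    {k V : Type*} [Field k] [IsAlgClosed k] [AddCommGroup V] [Module k V]
    (φ : V →ₗ[k] V)
    (W : Submodule k V) (hWfin : FiniteDimensional k W)
    (hWinv : ∀ x ∈ W, φ x ∈ W)
    (n : ℕ) (hr : LinearMap.range (φ ^ n) ≤ W) :
    (∀ l : k, l ≠ 0 →
      ((∃ v : V, v ≠ 0 ∧ φ v = l • v) ↔ (LinearMap.charpoly (φ.restrict hWinv)).IsRoot l)) ∧
    LinearMap.det ((1 + φ).restrict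
        (fun x hx => W.add_mem hx (hWinv x hx) : ∀ x ∈ W, (1 + φ) x ∈ W))
      = ((LinearMap.charpoly (φ.restrict hWinv)).roots.map (fun l => 1 + l)).prod := by
  refine ⟨fun l hl => ?_, ?_⟩
  · rw [← Module.End.hasEigenvalue_iff_isRoot_charpoly,
      Module.End.hasEigenvalue_restrict_iff hWinv
        fun _ => Submodule.mem_of_apply_eq_smul_of_range_pow_le hr hl]
  · have hrestrict : (1 + φ).restrict (fun x hx => W.add_mem hx (hWinv x hx))
        = algebraMap k _ 1 + φ.restrict hWinv := by
      ext; simp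
    rw [hrestrict, LinearMap.det_algebraMap_add_eq_prod_roots_charpoly_of_splits
      (IsAlgClosed.splits _)]
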